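/- arXiv:1303.5802 — 3 statements merged into one kernel-verified Lean document; each statement's English description precedes it below -/
import Mathlib

section
/- (Strong duality for the per-line subproblem) Let Z̃ be a symmetric positive definite n×n real matrix, λ ≥ 0, and μ ∈ ℝⁿ. Then inf over x ∈ ℝⁿ of [(1/2) xᵀ Z̃ x + λ ‖x‖₂ − μᵀ x] equals the maximum over χ ∈ ℝⁿ with ‖χ‖₂ ≤ 1 of [−(1/2) (μ + λχ)ᵀ Z̃⁻¹ (μ + λχ)], and this maximum is attained at some χ with ‖χ‖₂ ≤ 1. -/
open Matrix

/-!
Write `f` for the primal and `g` for the dual objective. Weak duality comes from completing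
the square: with `v = μ + λχ` and `w = Z⁻¹ v`,
`f x = g χ + ½ (x - w)ᵀ Z (x - w) + λ (χ ⬝ x + ‖x‖)`, and both correction terms are
nonnegative on the unit ball by positive definiteness and Cauchy–Schwarz. The concave dual `g` attains its
maximum on the compact unit ball at some `χ`. Comparing `χ` with the ball point `-w / ‖w‖`
along the segment between them, the first-order optimality condition gives
`λ (χ ⬝ w + ‖w‖) = 0`, so both correction terms vanish at `x = w` and the gap closes.
-/

section EuclideanNorm

variable {ι : Type*} [Fintype ι]

theorem sqrt_dotProduct_self_eq_norm_toLp (x : ι → ℝ) :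
    √(x ⬝ᵥ x) = ‖WithLp.toLp 2 x‖ := by
  rw [norm_eq_sqrt_real_inner, EuclideanSpace.inner_toLp_toLp, star_trivial]

theorem neg_sqrt_mul_sqrt_le_dotProduct (x y : ι → ℝ) :
    -(√(x ⬝ᵥ x) * √(y ⬝ᵥ y)) ≤ x ⬝ᵥ y := by
  have h := abs_real_inner_le_norm (WithLp.toLp 2 x) (WithLp.toLp 2 y)
  rw [EuclideanSpace.inner_toLp_toLp, star_trivial, dotProduct_comm] at h
  rw [sqrt_dotProduct_self_eq_norm_toLp, sqrt_dotProduct_self_eq_norm_toLp]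
  exact neg_le_of_abs_le h

variable (ι) in
def l2UnitBall : Set (ι → ℝ) := {χ | √(χ ⬝ᵥ χ) ≤ 1}

theorem l2UnitBall_eq_preimage :
    l2UnitBall ι = WithLp.toLp 2 ⁻¹' Metric.closedBall (0 : EuclideanSpace ℝ ι) 1 := by
  ext χ
  simp [l2UnitBall, sqrt_dotProduct_self_eq_norm_toLp]

theorem isCompact_l2UnitBall : IsCompact (l2UnitBall ι) := by
  rw [l2UnitBall_eq_preimage, ← PiLp.coe_symm_continuousLinearEquiv 2 ℝ]
  exact (PiLp.continuousLinearEquiv 2 ℝ _).symm.toHomeomorph.isCompact_preimage.mpr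
    (isCompact_closedBall _ _)

theorem convex_l2UnitBall : Convex ℝ (l2UnitBall ι) := by
  rw [l2UnitBall_eq_preimage, ← PiLp.coe_symm_continuousLinearEquiv 2 ℝ]
  exact (convex_closedBall _ _).linear_preimage
    (PiLp.continuousLinearEquiv 2 ℝ (fun _ : ι => ℝ)).symm.toLinearMap

end EuclideanNorm

theorem nonneg_of_forall_nonneg_add_mul {a b : ℝ}
    (h : ∀ t, 0 < t → t ≤ 1 → 0 ≤ a + t * b) : 0 ≤ a := by
  have hlim : Filter.Tendsto (fun t => a + t * b) (nhdsWithin 0 (Set.Ioi 0)) (nhds a) := by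
    have : Continuous (fun t : ℝ => a + t * b) := by fun_prop
    simpa using (this.tendsto 0).mono_left nhdsWithin_le_nhds
  refine ge_of_tendsto hlim ?_
  filter_upwards [Ioc_mem_nhdsGT zero_lt_one] with t ht using h t ht.1 ht.2

section QuadraticForm

variable {ι : Type*} [Fintype ι] {M : Matrix ι ι ℝ}

theorem dotProduct_mulVec_comm_of_transpose_eq (hM : Mᵀ = M) (a b : ι → ℝ) :
    a ⬝ᵥ (M *ᵥ b) = b ⬝ᵥ (M *ᵥ a) := by
  conv_lhs => rw [← hM]
  rw [dotProduct_mulVec, vecMul_transpose, dotProduct_comm]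

theorem add_smul_dotProduct_mulVec_add_smul (hM : Mᵀ = M) (a b : ι → ℝ) (t : ℝ) :
    (a + t • b) ⬝ᵥ (M *ᵥ (a + t • b))
      = a ⬝ᵥ (M *ᵥ a) + 2 * t * (b ⬝ᵥ (M *ᵥ a)) + t ^ 2 * (b ⬝ᵥ (M *ᵥ b)) := by
  simp only [mulVec_add, mulVec_smul, dotProduct_add, add_dotProduct, dotProduct_smul,
    smul_dotProduct, smul_eq_mul]
  linear_combination t * dotProduct_mulVec_comm_of_transpose_eq hM a b

end QuadraticForm

section Duality

variable {ι : Type*} [Fintype ι] [DecidableEq ι] {Z : Matrix ι ι ℝ} {lam : ℝ} {μ : ι → ℝ}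

variable (Z lam μ)

noncomputable def primalObjective (x : ι → ℝ) : ℝ :=
  (1/2) * (x ⬝ᵥ (Z *ᵥ x)) + lam * √(x ⬝ᵥ x) - μ ⬝ᵥ x

noncomputable def dualObjective (χ : ι → ℝ) : ℝ :=
  -(1/2) * ((μ + lam • χ) ⬝ᵥ (Z⁻¹ *ᵥ (μ + lam • χ)))

noncomputable def primalOfDual (χ : ι → ℝ) : ι → ℝ := Z⁻¹ *ᵥ (μ + lam • χ)

theorem exists_isMaxOn_dualObjective :
    ∃ χ ∈ l2UnitBall ι, IsMaxOn (dualObjective Z lam μ) (l2UnitBall ι) χ :=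
  isCompact_l2UnitBall.exists_isMaxOn ⟨0, by simp [l2UnitBall]⟩
    (by unfold dualObjective; fun_prop)

variable {Z lam μ}

theorem primalObjective_eq_dualObjective_add (hsym : Zᵀ = Z) (hdet : IsUnit Z.det)
    (χ x : ι → ℝ) :
    primalObjective Z lam μ x = dualObjective Z lam μ χ
      + (1/2) * ((x - primalOfDual Z lam μ χ) ⬝ᵥ (Z *ᵥ (x - primalOfDual Z lam μ χ)))
      + lam * (χ ⬝ᵥ x + √(x ⬝ᵥ x)) := by
  set v := μ + lam • χ with hv
  have hZw : Z *ᵥ (Z⁻¹ *ᵥ v) = v := by rw [mulVec_mulVec, mul_nonsing_inv _ hdet, one_mulVec]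
  have hcross := dotProduct_mulVec_comm_of_transpose_eq hsym (Z⁻¹ *ᵥ v) x
  rw [hZw] at hcross
  have hvx : v ⬝ᵥ x = μ ⬝ᵥ x + lam * (χ ⬝ᵥ x) := by
    rw [hv, add_dotProduct, smul_dotProduct, smul_eq_mul]
  simp only [primalObjective, dualObjective, primalOfDual, ← hv, mulVec_sub, sub_dotProduct,
    dotProduct_sub, hZw, hcross]
  rw [dotProduct_comm x v, dotProduct_comm (Z⁻¹ *ᵥ v) v, hvx]
  ring

theorem dualObjective_le_primalObjective (hZ : Z.PosDef) (hlam : 0 ≤ lam) {χ : ι → ℝ}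
    (hχ : χ ∈ l2UnitBall ι) (x : ι → ℝ) :
    dualObjective Z lam μ χ ≤ primalObjective Z lam μ x := by
  have hsym : Zᵀ = Z := (by simpa [conjTranspose_eq_transpose_of_trivial] using hZ.1 : Z.IsSymm).eq
  rw [primalObjective_eq_dualObjective_add hsym ((isUnit_iff_isUnit_det Z).mp hZ.isUnit) χ x]
  have hquad := hZ.posSemidef.dotProduct_mulVec_nonneg (x - primalOfDual Z lam μ χ)
  rw [star_trivial] at hquad
  have hcs := neg_sqrt_mul_sqrt_le_dotProduct χ x
  have hχ' : √(χ ⬝ᵥ χ) ≤ 1 := hχ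
  have hslack : 0 ≤ χ ⬝ᵥ x + √(x ⬝ᵥ x) := by nlinarith [Real.sqrt_nonneg (x ⬝ᵥ x)]
  nlinarith

theorem IsMaxOn.lam_mul_sub_dotProduct_primalOfDual_nonneg (hsym : Zᵀ = Z) {K : Set (ι → ℝ)}
    (hK : Convex ℝ K) {χ χ' : ι → ℝ} (hχ : χ ∈ K) (hχ' : χ' ∈ K)
    (hmax : IsMaxOn (dualObjective Z lam μ) K χ) :
    0 ≤ lam * ((χ' - χ) ⬝ᵥ primalOfDual Z lam μ χ) := by
  have hsymInv : Z⁻¹ᵀ = Z⁻¹ := by rw [transpose_nonsing_inv, hsym]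
  set d := χ' - χ
  refine nonneg_of_forall_nonneg_add_mul (b := lam ^ 2 / 2 * (d ⬝ᵥ (Z⁻¹ *ᵥ d)))
    fun t ht0 ht1 => (mul_nonneg_iff_of_pos_left ht0).mp ?_
  have hle : dualObjective Z lam μ (χ + t • d) ≤ dualObjective Z lam μ χ :=
    hmax (hK.add_smul_sub_mem hχ hχ' ⟨ht0.le, ht1⟩)
  have hshift : μ + lam • (χ + t • d) = (μ + lam • χ) + (lam * t) • d := by module
  rw [dualObjective, dualObjective, hshift, add_smul_dotProduct_mulVec_add_smul hsymInv] at hle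
  rw [primalOfDual]
  nlinarith

theorem IsMaxOn.lam_mul_dotProduct_primalOfDual_add_sqrt_eq_zero (hsym : Zᵀ = Z)
    (hlam : 0 ≤ lam) {χ : ι → ℝ} (hχ : χ ∈ l2UnitBall ι)
    (hmax : IsMaxOn (dualObjective Z lam μ) (l2UnitBall ι) χ) :
    lam * (χ ⬝ᵥ primalOfDual Z lam μ χ
      + √(primalOfDual Z lam μ χ ⬝ᵥ primalOfDual Z lam μ χ)) = 0 := by
  set w := primalOfDual Z lam μ χ
  set s := √(w ⬝ᵥ w)
  have hs : 0 ≤ s := Real.sqrt_nonneg _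
  have hss : s * s = w ⬝ᵥ w := Real.mul_self_sqrt (by simpa using dotProduct_self_star_nonneg w)
  -- `s⁻¹ = 0` when `w = 0`, so no case split is needed for membership
  have hdir_mem : -s⁻¹ • w ∈ l2UnitBall ι := by
    change √((-s⁻¹ • w) ⬝ᵥ (-s⁻¹ • w)) ≤ 1
    rw [sqrt_dotProduct_self_eq_norm_toLp, WithLp.toLp_smul, norm_smul,
      ← sqrt_dotProduct_self_eq_norm_toLp, norm_neg, Real.norm_eq_abs, abs_inv, abs_of_nonneg hs]
    exact inv_mul_le_one_of_le₀ le_rfl hs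
  have hdir : (-s⁻¹ • w) ⬝ᵥ w = -s := by
    rw [smul_dotProduct, smul_eq_mul, ← hss]
    rcases eq_or_ne s 0 with h | h
    · simp [h]
    · field_simp
  have hfirst := hmax.lam_mul_sub_dotProduct_primalOfDual_nonneg hsym convex_l2UnitBall hχ hdir_mem
  rw [sub_dotProduct, hdir] at hfirst
  have hcs := neg_sqrt_mul_sqrt_le_dotProduct χ w
  have hχ' : √(χ ⬝ᵥ χ) ≤ 1 := hχ
  have hslack : -s ≤ χ ⬝ᵥ w := by nlinarith [Real.sqrt_nonneg (χ ⬝ᵥ χ)]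
  nlinarith

end Duality

/-- Strong duality for the per-line subproblem: the primal infimum equals the
dual maximum over the unit ball, and the maximum is attained. -/
theorem stmt_13 (n : ℕ) (Z : Matrix (Fin n) (Fin n) ℝ) (hsym : Zᵀ = Z)
    (hpd : ∀ y : Fin n → ℝ, y ≠ 0 → 0 < y ⬝ᵥ (Z *ᵥ y))
    (lam : ℝ) (hlam : 0 ≤ lam) (μ : Fin n → ℝ) :
    ∃ χ : Fin n → ℝ, Real.sqrt (χ ⬝ᵥ χ) ≤ 1 ∧
      (∀ χ' : Fin n → ℝ, Real.sqrt (χ' ⬝ᵥ χ') ≤ 1 →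
        -(1/2) * ((μ + lam • χ') ⬝ᵥ (Z⁻¹ *ᵥ (μ + lam • χ')))
          ≤ -(1/2) * ((μ + lam • χ) ⬝ᵥ (Z⁻¹ *ᵥ (μ + lam • χ)))) ∧
      (⨅ x : Fin n → ℝ,
          ((1/2) * (x ⬝ᵥ (Z *ᵥ x)) + lam * Real.sqrt (x ⬝ᵥ x) - μ ⬝ᵥ x))
        = -(1/2) * ((μ + lam • χ) ⬝ᵥ (Z⁻¹ *ᵥ (μ + lam • χ))) := by
  have hZ : Z.PosDef := .of_dotProduct_mulVec_pos
    (by rwa [IsHermitian, conjTranspose_eq_transpose_of_trivial]) (by simpa using hpd)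
  obtain ⟨χ, hχ, hmax⟩ := exists_isMaxOn_dualObjective Z lam μ
  refine ⟨χ, hχ, fun χ' hχ' => hmax hχ', ?_⟩
  have hweak := dualObjective_le_primalObjective (μ := μ) hZ hlam hχ
  have hstrong : primalObjective Z lam μ (primalOfDual Z lam μ χ) = dualObjective Z lam μ χ := by
    rw [primalObjective_eq_dualObjective_add hsym ((isUnit_iff_isUnit_det Z).mp hZ.isUnit) χ,
      hmax.lam_mul_dotProduct_primalOfDual_add_sqrt_eq_zero hsym hlam hχ]
    simp
  change ⨅ x, primalObjective Z lam μ x = dualObjective Z lam μ χ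
  exact le_antisymm (hstrong ▸ ciInf_le ⟨_, Set.forall_mem_range.mpr hweak⟩ _) (le_ciInf hweak)
end

section
/- Let Z̃ be a symmetric positive semidefinite n×n real matrix, λ > 0, and μ ∈ ℝⁿ with ‖μ‖₂ ≤ λ. Define g(η) := η − (η/2) μᵀ (η Z̃ + (λ²/2) I)⁻¹ μ for η ≥ 0. Then g(η) ≥ 0 = g(0) for all η ≥ 0; in particular η = 0 is a global minimizer of g over [0, ∞). -/
open Matrix

/-
Put `M = η Z̃ + (λ²/2) I` and `x = M⁻¹ μ`, so that `g(η) = η (1 - t/2)` with `t = μ ⬝ x`.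
Since `μ = M x`, `t = x ⬝ M x ≥ (λ²/2) ‖x‖²`, while Cauchy–Schwarz and `‖μ‖ ≤ λ` give
`t² ≤ ‖μ‖² ‖x‖² ≤ λ² ‖x‖² ≤ 2 t`; hence `t ≤ 2` and `g(η) ≥ 0`.
-/

theorem Matrix.sq_dotProduct_le_dotProduct_self_mul {ι R : Type*} [Fintype ι] [CommRing R]
    [LinearOrder R] [IsStrictOrderedRing R] (v w : ι → R) :
    (v ⬝ᵥ w) ^ 2 ≤ (v ⬝ᵥ v) * (w ⬝ᵥ w) := by
  simpa only [dotProduct, sq] using Finset.sum_mul_sq_le_sq_mul_sq Finset.univ v w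

/-- `M` need not be invertible: if it is singular, then `M⁻¹ = 0` and the left-hand side vanishes. -/
theorem Matrix.dotProduct_inv_mulVec_le_two {ι 𝕜 : Type*} [Fintype ι] [DecidableEq ι] [Field 𝕜]
    [LinearOrder 𝕜] [IsStrictOrderedRing 𝕜] {M : Matrix ι ι 𝕜} {c : 𝕜}
    (hM : ∀ x, c * (x ⬝ᵥ x) ≤ x ⬝ᵥ (M *ᵥ x)) {μ : ι → 𝕜} (hμ : μ ⬝ᵥ μ ≤ 2 * c) :
    μ ⬝ᵥ (M⁻¹ *ᵥ μ) ≤ 2 := by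
  by_cases hdet : IsUnit M.det
  swap
  · simp [nonsing_inv_apply_not_isUnit M hdet]
  set x := M⁻¹ *ᵥ μ
  have hMx : M *ᵥ x = μ := by rw [mulVec_mulVec, mul_nonsing_inv M hdet, one_mulVec]
  have hx : 0 ≤ x ⬝ᵥ x := Fintype.sum_nonneg fun i => mul_self_nonneg (x i)
  have hμ0 : 0 ≤ μ ⬝ᵥ μ := Fintype.sum_nonneg fun i => mul_self_nonneg (μ i)
  have hc : 0 ≤ c := by linarith
  have hlower : c * (x ⬝ᵥ x) ≤ μ ⬝ᵥ x := by
    rw [← hMx, dotProduct_comm (M *ᵥ x)]; exact hM x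
  have hcs : (μ ⬝ᵥ x) ^ 2 ≤ 2 * (μ ⬝ᵥ x) :=
    calc (μ ⬝ᵥ x) ^ 2 ≤ (μ ⬝ᵥ μ) * (x ⬝ᵥ x) := sq_dotProduct_le_dotProduct_self_mul μ x
      _ ≤ 2 * c * (x ⬝ᵥ x) := mul_le_mul_of_nonneg_right hμ hx
      _ ≤ 2 * (μ ⬝ᵥ x) := by linarith
  nlinarith [mul_nonneg hc hx]

theorem stmt_17_general (n : ℕ) (Z : Matrix (Fin n) (Fin n) ℝ)
    (hpsd : ∀ x : Fin n → ℝ, 0 ≤ x ⬝ᵥ (Z *ᵥ x))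
    (lam : ℝ) (μ : Fin n → ℝ)
    (hμ : Real.sqrt (μ ⬝ᵥ μ) ≤ lam)
    (g : ℝ → ℝ)
    (hg : ∀ η, g η = η - (η/2) *
      (μ ⬝ᵥ ((η • Z + (lam^2/2) • (1 : Matrix (Fin n) (Fin n) ℝ))⁻¹ *ᵥ μ))) :
    g 0 = 0 ∧ ∀ η, 0 ≤ η → 0 ≤ g η := by
  refine ⟨by simp [hg], fun η hη => ?_⟩
  have hform : ∀ x : Fin n → ℝ, lam ^ 2 / 2 * (x ⬝ᵥ x) ≤
      x ⬝ᵥ ((η • Z + (lam ^ 2 / 2) • (1 : Matrix (Fin n) (Fin n) ℝ)) *ᵥ x) := fun x => by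
    simp only [add_mulVec, smul_mulVec, one_mulVec, dotProduct_add, dotProduct_smul, smul_eq_mul]
    nlinarith [mul_nonneg hη (hpsd x)]
  have hμμ : μ ⬝ᵥ μ ≤ 2 * (lam ^ 2 / 2) := by linarith [(Real.sqrt_le_iff.mp hμ).2]
  have ht := dotProduct_inv_mulVec_le_two hform hμμ
  rw [hg]
  nlinarith

/-- Thresholding in the scalar dual problem: if `‖μ‖₂ ≤ λ` then
`g(η) = η − (η/2) μᵀ (η Z̃ + (λ²/2) I)⁻¹ μ` satisfies `g(η) ≥ 0 = g(0)` for all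
`η ≥ 0`; in particular `η = 0` is a global minimizer of `g` over `[0, ∞)`. -/
theorem stmt_17 (n : ℕ) (Z : Matrix (Fin n) (Fin n) ℝ) (hsym : Zᵀ = Z)
    (hpsd : ∀ x : Fin n → ℝ, 0 ≤ x ⬝ᵥ (Z *ᵥ x))
    (lam : ℝ) (hlam : 0 < lam) (μ : Fin n → ℝ)
    (hμ : Real.sqrt (μ ⬝ᵥ μ) ≤ lam)
    (g : ℝ → ℝ)
    (hg : ∀ η, g η = η - (η/2) *
      (μ ⬝ᵥ ((η • Z + (lam^2/2) • (1 : Matrix (Fin n) (Fin n) ℝ))⁻¹ *ᵥ μ))) :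
    g 0 = 0 ∧ ∀ η, 0 ≤ η → 0 ≤ g η :=
  stmt_17_general n Z hpsd lam μ hμ g hg
end

section
/- (Proposition 2, multi-phase case, optimality certificate) Let Z̃ be a symmetric positive definite n×n real matrix, λ > 0, η > 0, and μ ∈ ℝⁿ. Define x := η (η Z̃ + (λ²/2) I)⁻¹ μ. If ‖x‖₂ = 2η/λ, then x is a global minimizer over ℝⁿ of f(y) := (1/2) yᵀ Z̃ y + λ ‖y‖₂ − μᵀ y. -/
/-!
With `c = λ² / (2η)`, the defining equation of `x` says `μ = Z̃ x + c x`, and the norm condition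
says `c ‖x‖ = λ`; so `μ - Z̃ x = λ x / ‖x‖` is a subgradient of `λ ‖·‖` at `x`, which is the
first-order optimality condition of the convex function `f`. Concretely,
`f y - f x = ½ (y - x)ᵀ Z̃ (y - x) + (λ ‖y‖ - c ⟪x, y⟫)`, and both terms are nonnegative, the
second by Cauchy–Schwarz.
-/

open Matrix

namespace Matrix

variable {ι : Type*} [Fintype ι]

lemma posDef_of_transpose_eq {Z : Matrix ι ι ℝ} (hsym : Zᵀ = Z)
    (hpd : ∀ y : ι → ℝ, y ≠ 0 → 0 < y ⬝ᵥ (Z *ᵥ y)) : Z.PosDef :=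
  PosDef.of_dotProduct_mulVec_pos hsym fun y hy => hpd y hy

lemma dotProduct_le_sqrt_mul_sqrt (x y : ι → ℝ) : x ⬝ᵥ y ≤ √(x ⬝ᵥ x) * √(y ⬝ᵥ y) := by
  simpa [dotProduct, sq] using Real.sum_mul_le_sqrt_mul_sqrt Finset.univ x y

lemma mulVec_add_smul_eq_of_eq_smul_inv_mulVec [DecidableEq ι] {Z : Matrix ι ι ℝ} {η a : ℝ}
    (hη : η ≠ 0) (hA : IsUnit (η • Z + a • 1).det) {μ x : ι → ℝ}
    (hx : x = η • ((η • Z + a • 1)⁻¹ *ᵥ μ)) : Z *ᵥ x + (a / η) • x = μ := by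
  have hAx : (η • Z + a • 1) *ᵥ x = η • μ := by
    rw [hx, mulVec_smul, mulVec_mulVec, mul_nonsing_inv _ hA, one_mulVec]
  rw [← smul_right_inj hη, ← hAx, add_mulVec, smul_mulVec, smul_mulVec, one_mulVec, smul_add,
    smul_smul, mul_div_cancel₀ a hη]

noncomputable def quadNormObjective (Z : Matrix ι ι ℝ) (lam : ℝ) (μ y : ι → ℝ) : ℝ :=
  1 / 2 * (y ⬝ᵥ (Z *ᵥ y)) + lam * √(y ⬝ᵥ y) - μ ⬝ᵥ y

variable {Z : Matrix ι ι ℝ} {lam c : ℝ} {μ x : ι → ℝ}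

lemma quadNormObjective_sub_eq (hsym : Z.IsSymm) (hμ : μ = Z *ᵥ x + c • x)
    (hlam : c * √(x ⬝ᵥ x) = lam) (y : ι → ℝ) :
    quadNormObjective Z lam μ y - quadNormObjective Z lam μ x
      = 1 / 2 * ((y - x) ⬝ᵥ (Z *ᵥ (y - x))) + (lam * √(y ⬝ᵥ y) - c * (x ⬝ᵥ y)) := by
  have hZ : ∀ a b : ι → ℝ, a ⬝ᵥ (Z *ᵥ b) = b ⬝ᵥ (Z *ᵥ a) := fun a b => by
    rw [dotProduct_mulVec, ← mulVec_transpose, hsym.eq, dotProduct_comm]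
  have hxx : c * (x ⬝ᵥ x) = lam * √(x ⬝ᵥ x) := by
    have hx0 : 0 ≤ x ⬝ᵥ x := dotProduct_star_self_nonneg x
    rw [← hlam, mul_assoc, Real.mul_self_sqrt hx0]
  simp only [quadNormObjective, hμ, add_dotProduct, smul_dotProduct, smul_eq_mul, mulVec_sub,
    sub_dotProduct, dotProduct_sub]
  rw [dotProduct_comm (Z *ᵥ x), dotProduct_comm (Z *ᵥ x), hZ y x, ← hxx]
  ring

theorem quadNormObjective_le_of_stationary (hZ : Z.PosSemidef) (hc : 0 ≤ c)
    (hμ : μ = Z *ᵥ x + c • x) (hlam : c * √(x ⬝ᵥ x) = lam) (y : ι → ℝ) :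
    quadNormObjective Z lam μ x ≤ quadNormObjective Z lam μ y := by
  have hquad : 0 ≤ (y - x) ⬝ᵥ (Z *ᵥ (y - x)) := hZ.dotProduct_mulVec_nonneg (y - x)
  have hcs : c * (x ⬝ᵥ y) ≤ lam * √(y ⬝ᵥ y) := by
    rw [← hlam, mul_assoc]
    exact mul_le_mul_of_nonneg_left (dotProduct_le_sqrt_mul_sqrt x y) hc
  have := quadNormObjective_sub_eq (isHermitian_iff_isSymm.1 hZ.isHermitian) hμ hlam y
  linarith

end Matrix

/-- Proposition 2, multi-phase case (optimality certificate): with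
`x = η (η Z̃ + (λ²/2) I)⁻¹ μ`, if `‖x‖₂ = 2η/λ` then `x` is a global minimizer of
`f(y) = (1/2) yᵀ Z̃ y + λ‖y‖₂ − μᵀ y`. -/
theorem stmt_18 (n : ℕ) (Z : Matrix (Fin n) (Fin n) ℝ) (hsym : Zᵀ = Z)
    (hpd : ∀ y : Fin n → ℝ, y ≠ 0 → 0 < y ⬝ᵥ (Z *ᵥ y))
    (lam η : ℝ) (hlam : 0 < lam) (hη : 0 < η) (μ : Fin n → ℝ)
    (x : Fin n → ℝ)
    (hx : x = η • ((η • Z + (lam^2/2) • (1 : Matrix (Fin n) (Fin n) ℝ))⁻¹ *ᵥ μ))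
    (hnorm : Real.sqrt (x ⬝ᵥ x) = 2 * η / lam)
    (f : (Fin n → ℝ) → ℝ)
    (hf : ∀ y, f y = (1/2) * (y ⬝ᵥ (Z *ᵥ y)) + lam * Real.sqrt (y ⬝ᵥ y) - μ ⬝ᵥ y) :
    ∀ y, f x ≤ f y := by
  have hZ : Z.PosDef := posDef_of_transpose_eq hsym hpd
  have hA : IsUnit (η • Z + (lam ^ 2 / 2) • 1).det :=
    (isUnit_iff_isUnit_det _).1 ((hZ.smul hη).add (PosDef.one.smul (by positivity))).isUnit
  have hμ := mulVec_add_smul_eq_of_eq_smul_inv_mulVec hη.ne' hA hx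
  intro y
  rw [hf, hf]
  refine quadNormObjective_le_of_stationary hZ.posSemidef (by positivity) hμ.symm ?_ y
  rw [hnorm]
  field_simp
end
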